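/- Let S be a ring with a family of orthogonal idempotents f_1, ..., f_a summing to an idempotent f, such that f_j S f_i = 0 unless |i - j| ≤ 1, and such that f_a S f_{a-1} S f_a = 0 and f_j S f_{j-1} S f_j ⊆ f_j S f_{j+1} S f_j for 2 ≤ j ≤ a-1. Define N = Σ_{j=1}^{a-1} (f_j S f_{j+1} + f_{j+1} S f_j + f_j S f_{j+1} S f_j). Then N is a two-sided ideal of the subring fSf, N² = Σ_{j=1}^{a-1} f_j S f_{j+1} S f_j, and N³ = 0. -/

import Mathlib

variable (F S : Type*) [Field F] [Ring S] [Algebra F S]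

/-- The subspace `f i * S * f j` of `S`. -/
noncomputable def peirceSub (f : ℤ → S) (i j : ℤ) : Submodule F S :=
  LinearMap.range ((LinearMap.mulLeft F (f i)).comp (LinearMap.mulRight F (f j)))

/-!
Write `X = Σⱼ fⱼ S fⱼ₊₁` and `Y = Σⱼ fⱼ₊₁ S fⱼ`. Since `fᵢ S fₖ = 0` for `|i - k| ≥ 2`, both are
square-zero, and `XY = Σⱼ fⱼ S fⱼ₊₁ S fⱼ`, so `N = X + Y + XY`. The two conditions on
`fⱼ S fⱼ₋₁ S fⱼ` give `YX ⊆ XY`. In the idempotent semiring of subspaces of `S` these three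
relations alone give `N² = XY` and `N³ = 0`. Moreover `fSf` lies in `Σᵢ fᵢ S fᵢ + X + Y`, and the
diagonal corners `fᵢ S fᵢ` multiply `X` and `Y` into themselves, so `N` is an ideal of `fSf`.
-/

section IdemSemiring

variable {R : Type*} [IdemSemiring R] {X Y D : R}

theorem sum_le_of_forall_le_idem {ι : Type*} {s : Finset ι} {g : ι → R} {b : R}
    (h : ∀ i ∈ s, g i ≤ b) : ∑ i ∈ s, g i ≤ b :=
  Finset.sum_induction g (· ≤ b) (fun _ _ => add_le) zero_le h

variable (hXX : X * X = 0) (hYY : Y * Y = 0) (hYX : Y * X ≤ X * Y)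
include hXX hYY hYX

theorem mul_self_add_add_mul : (X + Y + X * Y) * (X + Y + X * Y) = X * Y := by
  have hXYX : X * Y * X = 0 := nonpos_iff_eq_zero.mp <| by
    grw [mul_assoc, hYX, ← mul_assoc, hXX, zero_mul]
  have hYXY : Y * X * Y = 0 := nonpos_iff_eq_zero.mp <| by
    grw [hYX, mul_assoc, hYY, mul_zero]
  have hXYY : X * Y * Y = 0 := by rw [mul_assoc, hYY, mul_zero]
  simp only [add_mul, mul_add, ← mul_assoc, hXX, hYY, hXYX, hYXY, hXYY, add_zero, zero_add]
  exact add_eq_right_iff_le.mpr hYX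

theorem mul_self_mul_add_add_mul : (X + Y + X * Y) * (X + Y + X * Y) * (X + Y + X * Y) = 0 := by
  set N := X + Y + X * Y
  have hYN : Y ≤ N := le_add_right le_add_self
  refine nonpos_iff_eq_zero.mp ?_
  calc N * N * N = X * (Y * N) := by rw [mul_self_add_add_mul hXX hYY hYX, mul_assoc]
    _ ≤ X * (N * N) := by gcongr
    _ = 0 := by rw [mul_self_add_add_mul hXX hYY hYX, ← mul_assoc, hXX, zero_mul]

theorem add_add_mul_add_add_mul_le (hDX : D * X ≤ X) (hDY : D * Y ≤ Y) :
    (D + X + Y) * (X + Y + X * Y) ≤ X + Y + X * Y := by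
  set N := X + Y + X * Y with hN
  have hNN : N * N ≤ N := by rw [mul_self_add_add_mul hXX hYY hYX]; exact le_add_self
  have hDN : D * N ≤ N := by
    rw [hN, mul_add, mul_add, ← mul_assoc]
    gcongr
  have hXN : X * N ≤ N := (mul_le_mul_left (le_add_right le_self_add) N).trans hNN
  have hYN : Y * N ≤ N := (mul_le_mul_left (le_add_right le_add_self) N).trans hNN
  rw [add_mul, add_mul]
  exact add_le (add_le hDN hXN) hYN

theorem add_add_mul_mul_add_add_le (hXD : X * D ≤ X) (hYD : Y * D ≤ Y) :
    (X + Y + X * Y) * (D + X + Y) ≤ X + Y + X * Y := by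
  set N := X + Y + X * Y with hN
  have hNN : N * N ≤ N := by rw [mul_self_add_add_mul hXX hYY hYX]; exact le_add_self
  have hND : N * D ≤ N := by
    rw [hN, add_mul, add_mul, mul_assoc]
    gcongr
  have hNX : N * X ≤ N := (mul_le_mul_right (le_add_right le_self_add) N).trans hNN
  have hNY : N * Y ≤ N := (mul_le_mul_right (le_add_right le_add_self) N).trans hNN
  rw [mul_add, mul_add]
  exact add_le (add_le hND hNX) hNY

end IdemSemiring

noncomputable def peirceSuperdiag (f : ℤ → S) (a : ℤ) : Submodule F S :=
  ∑ j ∈ Finset.Icc 1 (a - 1), peirceSub F S f j (j + 1)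

noncomputable def peirceSubdiag (f : ℤ → S) (a : ℤ) : Submodule F S :=
  ∑ j ∈ Finset.Icc 1 (a - 1), peirceSub F S f (j + 1) j

section Peirce

variable {F S} {f : ℤ → S}

theorem mem_peirceSub {i j : ℤ} {x : S} : x ∈ peirceSub F S f i j ↔ ∃ s, f i * s * f j = x := by
  simp only [peirceSub, LinearMap.mem_range, LinearMap.comp_apply, LinearMap.mulLeft_apply,
    LinearMap.mulRight_apply, mul_assoc]

theorem peirceSub_mul_peirceSub_le_iff {i j k l : ℤ} {Q : Submodule F S} :
    peirceSub F S f i j * peirceSub F S f k l ≤ Q ↔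
      ∀ s t, f i * s * f j * (f k * t * f l) ∈ Q := by
  rw [Submodule.mul_le]
  constructor
  · exact fun h s t => h _ (mem_peirceSub.mpr ⟨s, rfl⟩) _ (mem_peirceSub.mpr ⟨t, rfl⟩)
  · rintro h _ hx _ hy
    obtain ⟨s, rfl⟩ := mem_peirceSub.mp hx
    obtain ⟨t, rfl⟩ := mem_peirceSub.mp hy
    exact h s t

theorem peirceSub_mul_peirceSub_le (hidem : ∀ i, f i * f i = f i) (i j l : ℤ) :
    peirceSub F S f i j * peirceSub F S f j l ≤ peirceSub F S f i l :=
  peirceSub_mul_peirceSub_le_iff.mpr fun s t => mem_peirceSub.mpr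
    ⟨s * f j * t, by simp only [← mul_assoc]; rw [mul_assoc _ (f j) (f j), hidem]⟩

theorem peirceSub_mul_peirceSub_of_ne (horth : ∀ i j, i ≠ j → f i * f j = 0) {j k : ℤ}
    (h : j ≠ k) (i l : ℤ) : peirceSub F S f i j * peirceSub F S f k l = ⊥ :=
  le_bot_iff.mp <| peirceSub_mul_peirceSub_le_iff.mpr fun s t => by
    rw [Submodule.mem_bot, mul_assoc, ← mul_assoc (f j), ← mul_assoc (f j), horth j k h]
    simp

theorem peirceSub_mul_peirceSub_eq_bot_of_forall (hidem : ∀ i, f i * f i = f i) {i j k : ℤ}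
    (h : ∀ s t, f i * s * f j * t * f k = 0) :
    peirceSub F S f i j * peirceSub F S f j k = ⊥ :=
  le_bot_iff.mp <| peirceSub_mul_peirceSub_le_iff.mpr fun s t => by
    rw [Submodule.mem_bot, ← h s t]
    simp only [← mul_assoc]; rw [mul_assoc _ (f j) (f j), hidem]

theorem peirceSub_eq_bot (hvanish : ∀ i j : ℤ, 2 ≤ |i - j| → ∀ s : S, f j * s * f i = 0)
    {i j : ℤ} (h : 2 ≤ |i - j|) : peirceSub F S f i j = ⊥ :=
  eq_bot_iff.mpr fun x hx => by
    obtain ⟨s, rfl⟩ := mem_peirceSub.mp hx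
    exact (Submodule.mem_bot F).mpr (hvanish j i (by rwa [abs_sub_comm]) s)

-- `peirceSub F S (fun _ => e) 0 0` is the corner ring `e S e`.
theorem corner_le_sum_sum (s : Finset ℤ) :
    peirceSub F S (fun _ => ∑ i ∈ s, f i) 0 0 ≤ ∑ i ∈ s, ∑ k ∈ s, peirceSub F S f i k :=
  fun x hx => by
  obtain ⟨t, rfl⟩ := mem_peirceSub.mp hx
  rw [Finset.sum_mul, Finset.sum_mul]
  refine Submodule.sum_mem _ fun i hi => ?_
  rw [Finset.mul_sum]
  refine Submodule.sum_mem _ fun k hk => ?_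
  have hle : peirceSub F S f i k ≤ ∑ i ∈ s, ∑ k ∈ s, peirceSub F S f i k :=
    (Finset.single_le_sum_of_canonicallyOrdered (f := fun k => peirceSub F S f i k) hk).trans
      (Finset.single_le_sum_of_canonicallyOrdered (f := fun i => ∑ k ∈ s, peirceSub F S f i k) hi)
  exact hle (mem_peirceSub.mpr ⟨t, by simp only [mul_assoc]⟩)

variable (hidem : ∀ i, f i * f i = f i) (horth : ∀ i j, i ≠ j → f i * f j = 0)
include hidem horth

theorem peirceSub_self_mul_le (i k l : ℤ) :
    peirceSub F S f i i * peirceSub F S f k l ≤ peirceSub F S f k l := by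
  rcases eq_or_ne i k with rfl | h
  · exact peirceSub_mul_peirceSub_le hidem i i l
  · simp [peirceSub_mul_peirceSub_of_ne horth h]

theorem mul_peirceSub_self_le (i k l : ℤ) :
    peirceSub F S f k l * peirceSub F S f i i ≤ peirceSub F S f k l := by
  rcases eq_or_ne l i with rfl | h
  · exact peirceSub_mul_peirceSub_le hidem k l l
  · simp [peirceSub_mul_peirceSub_of_ne horth h]

theorem sum_peirceSub_self_mul_sum_le {ι : Type*} (s : Finset ℤ) (t : Finset ι) (p q : ι → ℤ) :
    (∑ i ∈ s, peirceSub F S f i i) * ∑ j ∈ t, peirceSub F S f (p j) (q j) ≤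
      ∑ j ∈ t, peirceSub F S f (p j) (q j) := by
  rw [Finset.sum_mul]
  refine sum_le_of_forall_le_idem fun i _ => ?_
  rw [Finset.mul_sum]
  exact Finset.sum_le_sum fun j _ => peirceSub_self_mul_le hidem horth i (p j) (q j)

theorem sum_mul_sum_peirceSub_self_le {ι : Type*} (s : Finset ℤ) (t : Finset ι) (p q : ι → ℤ) :
    (∑ j ∈ t, peirceSub F S f (p j) (q j)) * ∑ i ∈ s, peirceSub F S f i i ≤
      ∑ j ∈ t, peirceSub F S f (p j) (q j) := by
  rw [Finset.mul_sum]
  refine sum_le_of_forall_le_idem fun i _ => ?_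
  rw [Finset.sum_mul]
  exact Finset.sum_le_sum fun j _ => mul_peirceSub_self_le hidem horth i (p j) (q j)

theorem sum_mul_of_mem {s : Finset ℤ} {j : ℤ} (hj : j ∈ s) : (∑ i ∈ s, f i) * f j = f j := by
  rw [Finset.sum_mul, Finset.sum_eq_single j (fun i _ hi => horth i j hi) (absurd hj), hidem]

theorem mul_sum_of_mem {s : Finset ℤ} {j : ℤ} (hj : j ∈ s) : f j * (∑ i ∈ s, f i) = f j := by
  rw [Finset.mul_sum, Finset.sum_eq_single j (fun i _ hi => horth j i hi.symm) (absurd hj), hidem]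

theorem peirceSub_le_corner {s : Finset ℤ} {i k : ℤ} (hi : i ∈ s) (hk : k ∈ s) :
    peirceSub F S f i k ≤ peirceSub F S (fun _ => ∑ i ∈ s, f i) 0 0 := fun x hx => by
  obtain ⟨t, rfl⟩ := mem_peirceSub.mp hx
  refine mem_peirceSub.mpr ⟨f i * t * f k, ?_⟩
  rw [← mul_assoc, ← mul_assoc, sum_mul_of_mem hidem horth hi, mul_assoc,
    mul_sum_of_mem hidem horth hk]

theorem corner_mul_corner_le (s : Finset ℤ) :
    peirceSub F S (fun _ => ∑ i ∈ s, f i) 0 0 * peirceSub F S (fun _ => ∑ i ∈ s, f i) 0 0 ≤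
      peirceSub F S (fun _ => ∑ i ∈ s, f i) 0 0 := by
  refine peirceSub_mul_peirceSub_le (fun _ => ?_) 0 0 0
  rw [Finset.mul_sum]
  exact Finset.sum_congr rfl fun j hj => sum_mul_of_mem hidem horth hj

end Peirce

section Tridiagonal

variable {F S} {f : ℤ → S} {a : ℤ} (hidem : ∀ i, f i * f i = f i)
  (horth : ∀ i j, i ≠ j → f i * f j = 0)
  (hvanish : ∀ i j : ℤ, 2 ≤ |i - j| → ∀ s : S, f j * s * f i = 0)
  (htop : ∀ s t : S, f a * s * f (a - 1) * t * f a = 0)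
  (hincl : ∀ j : ℤ, 2 ≤ j → j ≤ a - 1 →
    peirceSub F S f j (j - 1) * peirceSub F S f (j - 1) j ≤
      peirceSub F S f j (j + 1) * peirceSub F S f (j + 1) j)

include hidem hvanish in
theorem peirceSub_mul_peirceSub_eq_bot_of_far {i j l : ℤ} (h : 2 ≤ |i - l|) :
    peirceSub F S f i j * peirceSub F S f j l = ⊥ :=
  le_bot_iff.mp ((peirceSub_mul_peirceSub_le hidem i j l).trans (peirceSub_eq_bot hvanish h).le)

include hidem horth hvanish in
theorem peirceSuperdiag_mul_self : peirceSuperdiag F S f a * peirceSuperdiag F S f a = ⊥ := by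
  rw [peirceSuperdiag, Finset.sum_mul_sum]
  refine le_bot_iff.mp (sum_le_of_forall_le_idem fun j _ => sum_le_of_forall_le_idem fun l _ => ?_)
  rcases eq_or_ne (j + 1) l with rfl | h
  · exact (peirceSub_mul_peirceSub_eq_bot_of_far hidem hvanish (le_abs.mpr (by omega))).le
  · exact (peirceSub_mul_peirceSub_of_ne horth h _ _).le

include hidem horth hvanish in
theorem peirceSubdiag_mul_self : peirceSubdiag F S f a * peirceSubdiag F S f a = ⊥ := by
  rw [peirceSubdiag, Finset.sum_mul_sum]
  refine le_bot_iff.mp (sum_le_of_forall_le_idem fun j _ => sum_le_of_forall_le_idem fun l _ => ?_)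
  rcases eq_or_ne j (l + 1) with rfl | h
  · exact (peirceSub_mul_peirceSub_eq_bot_of_far hidem hvanish (le_abs.mpr (by omega))).le
  · exact (peirceSub_mul_peirceSub_of_ne horth h _ _).le

include horth in
theorem peirceSuperdiag_mul_peirceSubdiag :
    peirceSuperdiag F S f a * peirceSubdiag F S f a =
      ∑ j ∈ Finset.Icc 1 (a - 1), peirceSub F S f j (j + 1) * peirceSub F S f (j + 1) j := by
  rw [peirceSuperdiag, peirceSubdiag, Finset.sum_mul_sum]
  refine Finset.sum_congr rfl fun j hj => Finset.sum_eq_single j (fun l _ hl => ?_) (absurd hj)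
  rw [peirceSub_mul_peirceSub_of_ne horth (by omega), Submodule.zero_eq_bot]

include hidem htop hincl in
theorem peirceSub_succ_mul_peirceSub_le {j : ℤ} (hj : j ∈ Finset.Icc 1 (a - 1)) :
    peirceSub F S f (j + 1) j * peirceSub F S f j (j + 1) ≤
      ∑ j ∈ Finset.Icc 1 (a - 1), peirceSub F S f j (j + 1) * peirceSub F S f (j + 1) j := by
  rw [Finset.mem_Icc] at hj
  rcases eq_or_lt_of_le hj.2 with rfl | hlt
  · rw [sub_add_cancel, peirceSub_mul_peirceSub_eq_bot_of_forall hidem htop]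
    exact bot_le
  · have h := hincl (j + 1) (by omega) (by omega)
    rw [add_sub_cancel_right] at h
    exact h.trans (Finset.single_le_sum_of_canonicallyOrdered
      (f := fun j => peirceSub F S f j (j + 1) * peirceSub F S f (j + 1) j)
      (Finset.mem_Icc.mpr ⟨by omega, by omega⟩))

include hidem horth htop hincl in
theorem peirceSubdiag_mul_peirceSuperdiag_le :
    peirceSubdiag F S f a * peirceSuperdiag F S f a ≤
      peirceSuperdiag F S f a * peirceSubdiag F S f a := by
  rw [peirceSuperdiag_mul_peirceSubdiag horth, peirceSubdiag, peirceSuperdiag, Finset.sum_mul_sum]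
  refine sum_le_of_forall_le_idem fun j hj => sum_le_of_forall_le_idem fun l _ => ?_
  rcases eq_or_ne j l with rfl | h
  · exact peirceSub_succ_mul_peirceSub_le hidem htop hincl hj
  · exact (peirceSub_mul_peirceSub_of_ne horth h _ _).trans_le bot_le

include hvanish in
theorem peirceSub_le_diag_add_superdiag_add_subdiag {i k : ℤ} (hi : i ∈ Finset.Icc 1 a)
    (hk : k ∈ Finset.Icc 1 a) :
    peirceSub F S f i k ≤
      (∑ i ∈ Finset.Icc 1 a, peirceSub F S f i i) + peirceSuperdiag F S f a +
        peirceSubdiag F S f a := by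
  rw [Finset.mem_Icc] at hi hk
  obtain rfl | rfl | rfl | hfar : k = i ∨ k = i + 1 ∨ i = k + 1 ∨ 2 ≤ |i - k| := by
    rw [le_abs]; omega
  · exact le_add_right (le_add_right (Finset.single_le_sum_of_canonicallyOrdered
      (f := fun i => peirceSub F S f i i) (Finset.mem_Icc.mpr hi)))
  · exact le_add_right (le_add_left (Finset.single_le_sum_of_canonicallyOrdered
      (f := fun i => peirceSub F S f i (i + 1)) (Finset.mem_Icc.mpr ⟨by omega, by omega⟩)))
  · exact le_add_left (Finset.single_le_sum_of_canonicallyOrdered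
      (f := fun k => peirceSub F S f (k + 1) k) (Finset.mem_Icc.mpr ⟨by omega, by omega⟩))
  · rw [peirceSub_eq_bot hvanish hfar]
    exact bot_le

include hvanish in
theorem corner_le_diag_add_superdiag_add_subdiag :
    peirceSub F S (fun _ => ∑ i ∈ Finset.Icc 1 a, f i) 0 0 ≤
      (∑ i ∈ Finset.Icc 1 a, peirceSub F S f i i) + peirceSuperdiag F S f a +
        peirceSubdiag F S f a :=
  (corner_le_sum_sum _).trans <| sum_le_of_forall_le_idem fun _ hi =>
    sum_le_of_forall_le_idem fun _ hk => peirceSub_le_diag_add_superdiag_add_subdiag hvanish hi hk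

include hidem horth in
theorem peirceSuperdiag_le_corner :
    peirceSuperdiag F S f a ≤ peirceSub F S (fun _ => ∑ i ∈ Finset.Icc 1 a, f i) 0 0 :=
  sum_le_of_forall_le_idem fun j hj => by
    rw [Finset.mem_Icc] at hj
    exact peirceSub_le_corner hidem horth (Finset.mem_Icc.mpr ⟨by omega, by omega⟩)
      (Finset.mem_Icc.mpr ⟨by omega, by omega⟩)

include hidem horth in
theorem peirceSubdiag_le_corner :
    peirceSubdiag F S f a ≤ peirceSub F S (fun _ => ∑ i ∈ Finset.Icc 1 a, f i) 0 0 :=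
  sum_le_of_forall_le_idem fun j hj => by
    rw [Finset.mem_Icc] at hj
    exact peirceSub_le_corner hidem horth (Finset.mem_Icc.mpr ⟨by omega, by omega⟩)
      (Finset.mem_Icc.mpr ⟨by omega, by omega⟩)

end Tridiagonal

theorem ideal_filtration_of_schur_type
    (a : ℤ) (f : ℤ → S)
    (hidem : ∀ i, f i * f i = f i)
    (horth : ∀ i j, i ≠ j → f i * f j = 0)
    (hvanish : ∀ i j : ℤ, 2 ≤ |i - j| → ∀ s : S, f j * s * f i = 0)
    (htop : ∀ s t : S, f a * s * f (a - 1) * t * f a = 0)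
    (hincl : ∀ j : ℤ, 2 ≤ j → j ≤ a - 1 →
      peirceSub F S f j (j-1) * peirceSub F S f (j-1) j
        ≤ peirceSub F S f j (j+1) * peirceSub F S f (j+1) j) :
    let N : Submodule F S := ∑ j ∈ Finset.Icc 1 (a-1),
      (peirceSub F S f j (j+1) + peirceSub F S f (j+1) j
        + peirceSub F S f j (j+1) * peirceSub F S f (j+1) j)
    let fSf : Submodule F S :=
      peirceSub F S (fun _ => ∑ i ∈ Finset.Icc 1 a, f i) 0 0
    (N ≤ fSf) ∧
    (∀ x ∈ fSf, ∀ n ∈ N, x * n ∈ N ∧ n * x ∈ N) ∧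
    (N * N = ∑ j ∈ Finset.Icc 1 (a-1),
      peirceSub F S f j (j+1) * peirceSub F S f (j+1) j) ∧
    (N * N * N = ⊥) := by
  intro N fSf
  set X := peirceSuperdiag F S f a
  set Y := peirceSubdiag F S f a
  set D := ∑ i ∈ Finset.Icc 1 a, peirceSub F S f i i
  have hN : N = X + Y + X * Y := by
    rw [peirceSuperdiag_mul_peirceSubdiag horth]
    simp only [N, Finset.sum_add_distrib]
    rfl
  have hXX : X * X = 0 := peirceSuperdiag_mul_self hidem horth hvanish
  have hYY : Y * Y = 0 := peirceSubdiag_mul_self hidem horth hvanish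
  have hYX : Y * X ≤ X * Y := peirceSubdiag_mul_peirceSuperdiag_le hidem horth htop hincl
  have hfSf : fSf ≤ D + X + Y := corner_le_diag_add_superdiag_add_subdiag hvanish
  have hX : X ≤ fSf := peirceSuperdiag_le_corner hidem horth
  have hY : Y ≤ fSf := peirceSubdiag_le_corner hidem horth
  rw [hN, ← peirceSuperdiag_mul_peirceSubdiag horth, mul_self_mul_add_add_mul hXX hYY hYX,
    mul_self_add_add_mul hXX hYY hYX]
  refine ⟨add_le (add_le hX hY) ((mul_le_mul' hX hY).trans (corner_mul_corner_le hidem horth _)),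
    fun x hx n hn => ⟨?_, ?_⟩, rfl, Submodule.zero_eq_bot⟩
  · exact add_add_mul_add_add_mul_le hXX hYY hYX
      (sum_peirceSub_self_mul_sum_le hidem horth _ _ _ _)
      (sum_peirceSub_self_mul_sum_le hidem horth _ _ _ _)
      (Submodule.mul_mem_mul (hfSf hx) hn)
  · exact add_add_mul_mul_add_add_le hXX hYY hYX
      (sum_mul_sum_peirceSub_self_le hidem horth _ _ _ _)
      (sum_mul_sum_peirceSub_self_le hidem horth _ _ _ _)
      (Submodule.mul_mem_mul hn (hfSf hx))
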